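/- arXiv:math/0106262 — 2 statements merged into one kernel-verified Lean document; each statement's English description precedes it below -/
import Mathlib

section
/- Let A be a graded-commutative finite-dimensional rational algebra with no nonzero derivations of negative degree. Suppose given linear maps λ_S : A → A of degree -|S| indexed by nonempty subsets S of {1,...,s}, satisfying for all homogeneous u,v: λ_S(uv) = λ_S(u)v + (-1)^{|S||v|} u λ_S(v) + Σ_{S = P ⊔ Q, P,Q nonempty} ε(P,Q,u,v) λ_P(u) λ_Q(v) for appropriate signs ε. Then λ_S = 0 for every nonempty S. -/
structure GradedDerivation (R : Type*) [Ring R] [Algebra ℚ R]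
    (𝒜 : ℤ → Submodule ℚ R) (d : ℤ) where
  toLin : R →ₗ[ℚ] R
  mem_of_mem : ∀ (n : ℤ) (u : R), u ∈ 𝒜 n → toLin u ∈ 𝒜 (n + d)
  leibniz : ∀ (m n : ℤ) (u v : R), u ∈ 𝒜 m → v ∈ 𝒜 n →
    toLin (u * v) = toLin u * v + ((-1 : ℚ) ^ (d * m)) • (u * toLin v)

def IsGradedComm (R : Type*) [Ring R] [Algebra ℚ R] (𝒜 : ℤ → Submodule ℚ R) : Prop :=
  ∀ (m n : ℤ) (u v : R), u ∈ 𝒜 m → v ∈ 𝒜 n → u * v = ((-1 : ℚ) ^ (m * n)) • (v * u)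

def NoNegativeDerivations (R : Type*) [Ring R] [Algebra ℚ R] (𝒜 : ℤ → Submodule ℚ R) : Prop :=
  ∀ d : ℤ, d < 0 → ∀ D : GradedDerivation R 𝒜 d, D.toLin = 0
/-- a family of maps `λ_S` of degree `-|S|`, indexed by nonempty subsets `S` of
`{1,…,s}`, which are derivations modulo signed products of lower-order terms, all vanish when the
finite-dimensional graded-commutative algebra `A` has no nonzero negative-degree derivations. -/
theorem stmt2 (R : Type*) [Ring R] [Algebra ℚ R] (𝒜 : ℤ → Submodule ℚ R) [GradedRing 𝒜]
    (hcomm : IsGradedComm R 𝒜) [FiniteDimensional ℚ R]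
    (hno : NoNegativeDerivations R 𝒜)
    (s : ℕ) (lam : Finset (Fin s) → (R →ₗ[ℚ] R))
    (hdeg : ∀ S : Finset (Fin s), S.Nonempty → ∀ (n : ℤ) (u : R), u ∈ 𝒜 n →
      lam S u ∈ 𝒜 (n - S.card))
    (ε : Finset (Fin s) → Finset (Fin s) → ℤ → ℤ → ℚ)
    (hε : ∀ P Q m n, ε P Q m n = 1 ∨ ε P Q m n = -1)
    (hleib : ∀ S : Finset (Fin s), S.Nonempty → ∀ (m n : ℤ) (u v : R), u ∈ 𝒜 m → v ∈ 𝒜 n →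
      lam S (u * v) = lam S u * v + ((-1 : ℚ) ^ ((S.card : ℤ) * n)) • (u * lam S v)
        + ∑ P ∈ S.powerset.filter (fun P => P.Nonempty ∧ P ≠ S),
            ε P (S \ P) m n • (lam P u * lam (S \ P) v)) :
    ∀ S : Finset (Fin s), S.Nonempty → lam S = 0 := by
  intro S
  induction S using Finset.strongInduction with
  | _ S ih =>
  intro hS
  set k : ℤ := (S.card : ℤ) with hk
  -- the correction sum vanishes by induction
  have hsum : ∀ (m n : ℤ) (u v : R),
      (∑ P ∈ S.powerset.filter (fun P => P.Nonempty ∧ P ≠ S),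
        ε P (S \ P) m n • (lam P u * lam (S \ P) v)) = 0 := by
    intro m n u v
    apply Finset.sum_eq_zero
    intro P hP
    simp only [Finset.mem_filter, Finset.mem_powerset] at hP
    obtain ⟨hPS, hPne, hPneq⟩ := hP
    have : lam P = 0 := ih P (HasSubset.Subset.ssubset_of_ne hPS hPneq) hPne
    rw [this]
    simp
  have h1mem : (1 : R) ∈ 𝒜 0 := SetLike.one_mem_graded 𝒜
  -- a cleaned-up Leibniz rule
  have hL : ∀ (m n : ℤ) (u v : R), u ∈ 𝒜 m → v ∈ 𝒜 n →
      lam S (u * v) = lam S u * v + ((-1 : ℚ) ^ (k * n)) • (u * lam S v) := by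
    intro m n u v hu hv
    have := hleib S hS m n u v hu hv
    rw [hsum m n u v, add_zero] at this
    exact this
  -- lam S 1 = 0
  have h1 : lam S 1 = 0 := by
    have := hL 0 0 1 1 h1mem h1mem
    simp only [mul_zero, zpow_zero, one_smul, mul_one, one_mul] at this
    exact (left_eq_add.mp this)
  -- lam S kills pieces of degree n with k*n odd
  have hodd : ∀ (n : ℤ) (v : R), v ∈ 𝒜 n → Odd (k * n) → lam S v = 0 := by
    intro n v hv hkn
    have := hL 0 n 1 v h1mem hv
    rw [one_mul, h1, zero_mul, zero_add, one_mul, hkn.neg_one_zpow, neg_one_smul] at this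
    have h2 : (2 : ℚ) • lam S v = 0 := by
      have : lam S v + lam S v = 0 := by nth_rewrite 1 [this]; abel
      rw [two_smul]; exact this
    have := smul_eq_zero.mp h2
    simpa using this
  -- lam S is a graded derivation of degree -k
  have hleib' : ∀ (m n : ℤ) (u v : R), u ∈ 𝒜 m → v ∈ 𝒜 n →
      lam S (u * v) = lam S u * v + ((-1 : ℚ) ^ ((-k) * m)) • (u * lam S v) := by
    intro m n u v hu hv
    have hsgn : ((-1 : ℚ) ^ ((-k) * m)) = ((-1 : ℚ) ^ (k * m)) := by
      rw [neg_mul, zpow_neg]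
      rcases Int.even_or_odd (k * m) with h | h
      · rw [h.neg_one_zpow, inv_one]
      · rw [h.neg_one_zpow]; norm_num
    rw [hsgn]
    rcases Int.even_or_odd (k * m) with hm | hm <;> rcases Int.even_or_odd (k * n) with hn | hn
    · rw [hL m n u v hu hv, hm.neg_one_zpow, hn.neg_one_zpow]
    · -- k*m even, k*n odd : lam S v = 0, lam S (u*v) = 0, and lam S u * v = 0
      have hv0 : lam S v = 0 := hodd n v hv hn
      have huv0 : lam S (u * v) = 0 := by
        apply hodd (m + n) _ (SetLike.mul_mem_graded hu hv)
        rw [mul_add]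
        exact hm.add_odd hn
      have := hL m n u v hu hv
      rw [huv0, hv0, mul_zero, smul_zero, add_zero] at this
      rw [huv0, ← this, hv0, mul_zero, smul_zero, add_zero]
    · -- k*m odd, k*n even : lam S u = 0, lam S (u*v) = 0, and u * lam S v = 0
      have hu0 : lam S u = 0 := hodd m u hu hm
      have huv0 : lam S (u * v) = 0 := by
        apply hodd (m + n) _ (SetLike.mul_mem_graded hu hv)
        rw [mul_add]
        exact hm.add_even hn
      have := hL m n u v hu hv
      rw [huv0, hu0, zero_mul, zero_add, hn.neg_one_zpow, one_smul] at this
      rw [huv0, hu0, zero_mul, zero_add, ← this, smul_zero]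
    · rw [hL m n u v hu hv, hm.neg_one_zpow, hn.neg_one_zpow]
  -- assemble the derivation
  let D : GradedDerivation R 𝒜 (-k) :=
    { toLin := lam S
      mem_of_mem := by
        intro n u hu
        have := hdeg S hS n u hu
        rwa [sub_eq_add_neg] at this
      leibniz := hleib' }
  have hkpos : (0 : ℤ) < k := by
    have := Finset.card_pos.mpr hS
    rw [hk]
    exact_mod_cast this
  have := hno (-k) (by omega) D
  exact this
end

section
/- Let C be a space whose rational cohomology algebra has no nonzero negative-degree derivations and is finite-dimensional, let T = (S^1)^s, and let f : T × C → C be a map whose restriction f(y_0, -) : C → C is homotopic to the identity. Then f^* : H^*(C;ℚ) → H^*(T × C;ℚ) ≅ H^*(T;ℚ) ⊗ H^*(C;ℚ) is given by f^*(u) = 1 ⊗ u for all u. -/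
/-- The ordered product `ι_I = ι_{i₁} ⋯ ι_{i_k}` for `I = {i₁ < … < i_k}`. -/
def orderedProd {B : Type*} [Ring B] {s : ℕ} (ι : Fin s → B) (I : Finset (Fin s)) : B :=
  ((I.sort (· ≤ ·)).map ι).prod

open DirectSum GradedAlgebra

theorem neg_one_zpow_eq_of_even_sub {a b : ℤ} (h : Even (a - b)) :
    (-1 : ℚ) ^ a = (-1 : ℚ) ^ b := by
  rw [← sub_add_cancel a b, zpow_add₀ (by norm_num), h.neg_one_zpow, one_mul]

section Graded

variable {R : Type*} [Ring R] [Algebra ℚ R] {𝒜 : ℤ → Submodule ℚ R}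

theorem eq_zero_of_add_self_eq_zero {a : R} (h : a + a = 0) : a = 0 := by
  rw [← two_smul ℚ a] at h
  exact (smul_eq_zero.mp h).resolve_left two_ne_zero

namespace IsGradedComm

theorem mul_comm_of_mem_zero [GradedRing 𝒜] (hc : IsGradedComm R 𝒜) {a : R} (ha : a ∈ 𝒜 0)
    (b : R) : a * b = b * a := by
  induction b using DirectSum.Decomposition.inductionOn 𝒜 with
  | zero => simp
  | homogeneous b => simpa using hc 0 _ a b ha b.2
  | add b b' hb hb' => rw [mul_add, add_mul, hb, hb']

theorem mul_self_eq_zero_of_mem_one (hc : IsGradedComm R 𝒜) {a : R} (ha : a ∈ 𝒜 1) :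
    a * a = 0 := by
  refine eq_zero_of_add_self_eq_zero ?_
  nth_rewrite 1 [hc 1 1 a a ha ha]
  simp

end IsGradedComm

end Graded

namespace GradedAlgebra

variable {R : Type*} [Ring R] [Algebra ℚ R] (𝒜 : ℤ → Submodule ℚ R) [GradedRing 𝒜]

theorem proj_mem (n : ℤ) (a : R) : proj 𝒜 n a ∈ 𝒜 n := by
  simp

theorem proj_of_mem {n : ℤ} {a : R} (ha : a ∈ 𝒜 n) : proj 𝒜 n a = a := by
  simp [decompose_of_mem_same 𝒜 ha]

theorem proj_of_mem_of_ne {m n : ℤ} {a : R} (ha : a ∈ 𝒜 m) (h : m ≠ n) : proj 𝒜 n a = 0 := by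
  simp [decompose_of_mem_ne 𝒜 ha h]

theorem proj_mul_of_mem_left {p : ℤ} {z : R} (hz : z ∈ 𝒜 p) (r : ℤ) (y : R) :
    proj 𝒜 r (z * y) = z * proj 𝒜 (r - p) y := by
  have h := coe_decompose_mul_add_of_left_mem 𝒜 (j := r - p) (b := y) hz
  rwa [add_sub_cancel] at h

theorem proj_mul_of_mem_right {q : ℤ} {y : R} (hy : y ∈ 𝒜 q) (r : ℤ) (z : R) :
    proj 𝒜 r (z * y) = proj 𝒜 (r - q) z * y := by
  have h := coe_decompose_mul_add_of_right_mem 𝒜 (i := r - q) (a := z) hy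
  rwa [sub_add_cancel] at h

theorem proj_mul [DecidableEq R] (r : ℤ) (z y : R) :
    proj 𝒜 r (z * y) = ∑ p ∈ (decompose 𝒜 z).support, proj 𝒜 p z * proj 𝒜 (r - p) y := by
  conv_lhs => rw [← sum_support_decompose 𝒜 z, Finset.sum_mul, map_sum]
  exact Finset.sum_congr rfl fun p _ => proj_mul_of_mem_left 𝒜 (proj_mem 𝒜 p z) r y

theorem map_proj {S : Type*} [Ring S] [Algebra ℚ S] {ℬ : ℤ → Submodule ℚ S} [GradedRing ℬ]
    (f : R →ₗ[ℚ] S) (hf : ∀ n a, a ∈ 𝒜 n → f a ∈ ℬ n) (n : ℤ) (a : R) :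
    f (proj 𝒜 n a) = proj ℬ n (f a) := by
  induction a using DirectSum.Decomposition.inductionOn 𝒜 with
  | zero => simp
  | @homogeneous m a =>
    obtain ⟨a, ha⟩ := a
    by_cases h : m = n
    · subst h; rw [proj_of_mem 𝒜 ha, proj_of_mem ℬ (hf _ a ha)]
    · rw [proj_of_mem_of_ne 𝒜 ha h, proj_of_mem_of_ne ℬ (hf _ a ha) h, map_zero]
  | add a a' ha ha' => rw [map_add, map_add, ha, ha', map_add, map_add]

theorem apply_eq_zero_of_forall_mem {M : Type*} [AddCommGroup M] [Module ℚ M] (f : R →ₗ[ℚ] M)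
    (h : ∀ n a, a ∈ 𝒜 n → f a = 0) (a : R) : f a = 0 := by
  induction a using DirectSum.Decomposition.inductionOn 𝒜 with
  | zero => simp
  | homogeneous a => exact h _ _ a.2
  | add a a' ha ha' => rw [map_add, ha, ha', add_zero]

end GradedAlgebra

section Derivations

variable {R : Type*} [Ring R] [Algebra ℚ R] {𝒜 : ℤ → Submodule ℚ R}

theorem NoNegativeDerivations.apply_eq_zero (hno : NoNegativeDerivations R 𝒜) {d : ℤ} (hd : d < 0)
    (D : R →ₗ[ℚ] R) (hD : ∀ n u, u ∈ 𝒜 n → D u ∈ 𝒜 (n + d))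
    (hleib : ∀ m n u v, u ∈ 𝒜 m → v ∈ 𝒜 n →
      D (u * v) = D u * v + ((-1 : ℚ) ^ (d * m)) • (u * D v))
    (u : R) : D u = 0 :=
  LinearMap.congr_fun (hno d hd ⟨D, hD, hleib⟩) u

variable [GradedRing 𝒜]

variable (𝒜) in
noncomputable def eulerOp : R →ₗ[ℚ] R :=
  toModule ℚ ℤ R (fun n => (n : ℚ) • (𝒜 n).subtype) ∘ₗ (decomposeLinearEquiv 𝒜).toLinearMap

theorem eulerOp_of_mem {n : ℤ} {u : R} (hu : u ∈ 𝒜 n) : eulerOp 𝒜 u = (n : ℚ) • u := by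
  simp [eulerOp, decomposeLinearEquiv_apply, decompose_of_mem 𝒜 hu, ← lof_eq_of ℚ]

namespace NoNegativeDerivations

/-- `u ↦ z · deg(u) · u` is a derivation of degree `deg z`. -/
theorem mul_eq_zero_of_neg_left (hno : NoNegativeDerivations R 𝒜) (hc : IsGradedComm R 𝒜)
    {p : ℤ} (hp : p < 0) {z : R} (hz : z ∈ 𝒜 p) {n : ℤ} (hn : n ≠ 0) {u : R} (hu : u ∈ 𝒜 n) :
    z * u = 0 := by
  have hD := hno.apply_eq_zero hp (LinearMap.mulLeft ℚ z ∘ₗ eulerOp 𝒜)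
    (fun n u hu => by
      simpa [eulerOp_of_mem hu, add_comm n p] using
        Submodule.smul_mem _ (n : ℚ) (SetLike.mul_mem_graded hz hu))
    (fun m n u v hu hv => by
      simp only [LinearMap.comp_apply, LinearMap.mulLeft_apply,
        eulerOp_of_mem (SetLike.mul_mem_graded hu hv), eulerOp_of_mem hu, eulerOp_of_mem hv]
      rw [← mul_assoc u, hc m p u z hu hz, smul_mul_assoc, smul_smul, mul_comm m p, ← mul_zpow]
      simp only [neg_one_mul, neg_neg, one_zpow, one_smul, mul_smul_comm, smul_mul_assoc,
        mul_assoc, Int.cast_add, add_smul, mul_add])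
    u
  simp only [LinearMap.comp_apply, LinearMap.mulLeft_apply, eulerOp_of_mem hu,
    mul_smul_comm] at hD
  exact (smul_eq_zero.mp hD).resolve_left (by exact_mod_cast hn)

theorem mul_eq_zero_of_neg_right (hno : NoNegativeDerivations R 𝒜) (hc : IsGradedComm R 𝒜)
    {p : ℤ} (hp : p < 0) {z : R} (hz : z ∈ 𝒜 p) {n : ℤ} (hn : n ≠ 0) {u : R} (hu : u ∈ 𝒜 n) :
    u * z = 0 := by
  rw [hc n p u z hu hz, hno.mul_eq_zero_of_neg_left hc hp hz hn hu, smul_zero]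

theorem proj_zero_mul (hno : NoNegativeDerivations R 𝒜) (hc : IsGradedComm R 𝒜) (a b : R) :
    proj 𝒜 0 (a * b) = proj 𝒜 0 a * proj 𝒜 0 b := by
  induction a using DirectSum.Decomposition.inductionOn 𝒜 with
  | zero => simp
  | @homogeneous p a =>
    obtain ⟨a, ha⟩ := a
    rw [proj_mul_of_mem_left 𝒜 ha, zero_sub]
    rcases lt_trichotomy p 0 with hp | rfl | hp
    · rw [hno.mul_eq_zero_of_neg_left hc hp ha (by omega) (proj_mem 𝒜 _ b),
        proj_of_mem_of_ne 𝒜 ha hp.ne, zero_mul]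
    · rw [proj_of_mem 𝒜 ha, neg_zero]
    · rw [hno.mul_eq_zero_of_neg_right hc (by omega) (proj_mem 𝒜 _ b) hp.ne' ha,
        proj_of_mem_of_ne 𝒜 ha hp.ne', zero_mul]
  | add a a' ha ha' => rw [add_mul, map_add, map_add, ha, ha', add_mul]

end NoNegativeDerivations

end Derivations

section OrderedProd

variable {B : Type*} [Ring B] {s : ℕ} (ι : Fin s → B)

@[simp]
theorem orderedProd_empty : orderedProd ι ∅ = 1 := by
  simp [orderedProd]

@[simp]
theorem orderedProd_singleton (a : Fin s) : orderedProd ι {a} = ι a := by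
  simp [orderedProd]

variable {ι} [Algebra ℚ B] {ℬ : ℤ → Submodule ℚ B}

theorem orderedProd_mem [GradedRing ℬ] (hι : ∀ i, ι i ∈ ℬ 1) (K : Finset (Fin s)) :
    orderedProd ι K ∈ ℬ K.card := by
  have h := SetLike.list_prod_map_mem_graded (K.sort (· ≤ ·)) (fun _ => (1 : ℤ)) ι
    fun i _ => hι i
  simpa [orderedProd] using h

theorem exists_list_prod_eq_smul_of_perm (hc : IsGradedComm B ℬ) (hι : ∀ i, ι i ∈ ℬ 1)
    {l l' : List (Fin s)} (h : l.Perm l') :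
    ∃ c : ℚ, (l.map ι).prod = c • (l'.map ι).prod := by
  induction h with
  | nil => exact ⟨1, by simp⟩
  | cons a _ ih =>
    obtain ⟨c, hc⟩ := ih
    exact ⟨c, by simp [hc]⟩
  | swap a b l =>
    refine ⟨-1, ?_⟩
    have hab := hc 1 1 (ι b) (ι a) (hι b) (hι a)
    simp only [List.map_cons, List.prod_cons, ← mul_assoc, hab, smul_mul_assoc]
    norm_num
  | trans _ _ ih₁ ih₂ =>
    obtain ⟨c₁, h₁⟩ := ih₁
    obtain ⟨c₂, h₂⟩ := ih₂
    exact ⟨c₁ * c₂, by rw [h₁, h₂, smul_smul]⟩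

theorem orderedProd_mul_orderedProd (hc : IsGradedComm B ℬ) (hι : ∀ i, ι i ∈ ℬ 1)
    (I J : Finset (Fin s)) :
    ∃ c : ℚ, orderedProd ι I * orderedProd ι J = c • orderedProd ι (I ∪ J) ∧
      (¬ Disjoint I J → c = 0) := by
  have happ : orderedProd ι I * orderedProd ι J
      = ((I.sort (· ≤ ·) ++ J.sort (· ≤ ·)).map ι).prod := by
    simp [orderedProd]
  by_cases hIJ : Disjoint I J
  · have hperm : (I.sort (· ≤ ·) ++ J.sort (· ≤ ·)).Perm ((I ∪ J).sort (· ≤ ·)) := by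
      rw [← Multiset.coe_eq_coe, ← Multiset.coe_add, Finset.sort_eq, Finset.sort_eq,
        Finset.sort_eq, ← Finset.disjUnion_eq_union _ _ hIJ, Finset.disjUnion_val]
    obtain ⟨c, hc⟩ := exists_list_prod_eq_smul_of_perm hc hι hperm
    exact ⟨c, by rw [happ, hc, orderedProd], fun h => absurd hIJ h⟩
  · refine ⟨0, ?_, fun _ => rfl⟩
    obtain ⟨a, haI, haJ⟩ := Finset.not_disjoint_iff.mp hIJ
    have hperm : (I.sort (· ≤ ·) ++ J.sort (· ≤ ·)).Perm
        (a :: a :: ((I.sort (· ≤ ·)).erase a ++ (J.sort (· ≤ ·)).erase a)) :=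
      ((List.perm_cons_erase ((Finset.mem_sort _).mpr haI)).append
        (List.perm_cons_erase ((Finset.mem_sort _).mpr haJ))).trans
        List.perm_middle
    obtain ⟨c, hc'⟩ := exists_list_prod_eq_smul_of_perm hc hι hperm
    rw [happ, hc', List.map_cons, List.map_cons, List.prod_cons, List.prod_cons, ← mul_assoc,
      hc.mul_self_eq_zero_of_mem_one (hι a)]
    simp

end OrderedProd

section Coordinates

variable {A B : Type*} [Ring A] [Algebra ℚ A] [Ring B] [Algebra ℚ B] {s : ℕ}
  (ι : Fin s → B) (j : A →ₐ[ℚ] B)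

noncomputable def basisSum : (Finset (Fin s) → A) →ₗ[ℚ] B :=
  ∑ I, LinearMap.mulLeft ℚ (orderedProd ι I) ∘ₗ j.toLinearMap ∘ₗ LinearMap.proj I

theorem basisSum_apply (c : Finset (Fin s) → A) :
    basisSum ι j c = ∑ I, orderedProd ι I * j (c I) := by
  simp [basisSum]

theorem basisSum_single (I : Finset (Fin s)) (a : A) :
    basisSum ι j (Pi.single I a) = orderedProd ι I * j a := by
  rw [basisSum_apply, Finset.sum_eq_single I (fun K _ hK => by simp [hK]) (by simp)]
  simp

variable {ι j}

noncomputable def coords (h : Function.Bijective (basisSum ι j)) :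
    B ≃ₗ[ℚ] (Finset (Fin s) → A) :=
  (LinearEquiv.ofBijective _ h).symm

variable (h : Function.Bijective (basisSum ι j))

@[simp]
theorem basisSum_coords (b : B) : basisSum ι j (coords h b) = b :=
  (LinearEquiv.ofBijective _ h).apply_symm_apply b

@[simp]
theorem coords_basisSum (c : Finset (Fin s) → A) : coords h (basisSum ι j c) = c :=
  (LinearEquiv.ofBijective _ h).symm_apply_apply c

theorem coords_orderedProd_mul (I : Finset (Fin s)) (a : A) :
    coords h (orderedProd ι I * j a) = Pi.single I a := by
  rw [← basisSum_single, coords_basisSum]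

variable {𝒜 : ℤ → Submodule ℚ A} {ℬ : ℤ → Submodule ℚ B} [GradedRing 𝒜] [GradedRing ℬ]

theorem proj_orderedProd_mul (hι : ∀ i, ι i ∈ ℬ 1) (hj : ∀ n a, a ∈ 𝒜 n → j a ∈ ℬ n)
    (n : ℤ) (K : Finset (Fin s)) (a : A) :
    proj ℬ n (orderedProd ι K * j a) = orderedProd ι K * j (proj 𝒜 (n - K.card) a) := by
  rw [proj_mul_of_mem_left ℬ (orderedProd_mem hι K)]
  exact congrArg _ (map_proj 𝒜 j.toLinearMap hj _ a).symm

theorem coords_mem (hι : ∀ i, ι i ∈ ℬ 1) (hj : ∀ n a, a ∈ 𝒜 n → j a ∈ ℬ n)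
    {n : ℤ} {b : B} (hb : b ∈ ℬ n) (K : Finset (Fin s)) :
    coords h b K ∈ 𝒜 (n - K.card) := by
  have hproj : basisSum ι j (fun K => proj 𝒜 (n - K.card) (coords h b K)) = b := by
    conv_rhs => rw [← proj_of_mem ℬ hb, ← basisSum_coords h b, basisSum_apply, map_sum]
    simp only [basisSum_apply, proj_orderedProd_mul hι hj]
  rw [← hproj, coords_basisSum]
  exact proj_mem 𝒜 _ _

end Coordinates

section ChangeOfBasis

variable {A B : Type*} [Ring A] [Algebra ℚ A] [Ring B] [Algebra ℚ B] {s : ℕ}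
  {ι : Fin s → B} {j : A →ₐ[ℚ] B} (h : Function.Bijective (basisSum ι j))

noncomputable def coordFiltration (n : ℤ) : Submodule ℚ B :=
  (Submodule.pi {K : Finset (Fin s) | n < K.card} fun _ => ⊥).comap (coords h).toLinearMap

theorem mem_coordFiltration {n : ℤ} {b : B} :
    b ∈ coordFiltration h n ↔ ∀ K : Finset (Fin s), n < K.card → coords h b K = 0 := by
  simp [coordFiltration]

theorem coordFiltration_mono {m n : ℤ} (hmn : m ≤ n) : coordFiltration h m ≤ coordFiltration h n :=
  fun _ hb => (mem_coordFiltration h).mpr fun K hK => (mem_coordFiltration h).mp hb K (by omega)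

theorem mem_coordFiltration_card (b : B) : b ∈ coordFiltration h s :=
  (mem_coordFiltration h).mpr fun K hK => absurd hK (by simpa using K.card_le_univ)

theorem eq_zero_of_mem_coordFiltration_neg_one {b : B} (hb : b ∈ coordFiltration h (-1)) :
    b = 0 :=
  (coords h).map_eq_zero_iff.mp (funext fun K => (mem_coordFiltration h).mp hb K (by omega))

theorem orderedProd_mul_mem_coordFiltration {n : ℤ} {K : Finset (Fin s)} (hK : K.card ≤ n)
    (a : A) : orderedProd ι K * j a ∈ coordFiltration h n :=
  (mem_coordFiltration h).mpr fun K' hK' => by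
    rw [coords_orderedProd_mul, Pi.single_apply, if_neg (by rintro rfl; omega)]

theorem map_mem_of_mem_coordFiltration (L : B →ₗ[ℚ] B) (S : Submodule ℚ B) {n : ℤ}
    (hL : ∀ (K : Finset (Fin s)) a, K.card ≤ n → L (orderedProd ι K * j a) ∈ S) {b : B}
    (hb : b ∈ coordFiltration h n) : L b ∈ S := by
  rw [← basisSum_coords h b, basisSum_apply, map_sum]
  refine Submodule.sum_mem _ fun K _ => ?_
  by_cases hK : (K.card : ℤ) ≤ n
  · exact hL K _ hK
  · rw [(mem_coordFiltration h).mp hb K (by omega), map_zero, mul_zero, map_zero]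
    exact zero_mem _

variable {𝒜 : ℤ → Submodule ℚ A} {ℬ : ℤ → Submodule ℚ B}

theorem mul_mem_coordFiltration_add_one (hc : IsGradedComm B ℬ) (hι : ∀ i, ι i ∈ ℬ 1)
    (a : Fin s) {n : ℤ} {b : B} (hb : b ∈ coordFiltration h n) :
    ι a * b ∈ coordFiltration h (n + 1) := by
  refine map_mem_of_mem_coordFiltration h (LinearMap.mulLeft ℚ (ι a)) _ (fun K c hK => ?_) hb
  obtain ⟨c', hc', -⟩ := orderedProd_mul_orderedProd hc hι {a} K
  rw [LinearMap.mulLeft_apply, ← mul_assoc, ← orderedProd_singleton ι a, hc', smul_mul_assoc]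
  refine Submodule.smul_mem _ _ (orderedProd_mul_mem_coordFiltration h ?_ c)
  have := Finset.card_insert_le a K
  rw [← Finset.insert_eq]
  omega

variable [GradedRing ℬ]

theorem map_mul_mem_coordFiltration (hc : IsGradedComm B ℬ) (hι : ∀ i, ι i ∈ ℬ 1)
    (hj : ∀ n a, a ∈ 𝒜 n → j a ∈ ℬ n) {m : ℤ} {z : A} (hz : z ∈ 𝒜 m) {n : ℤ} {b : B}
    (hb : b ∈ coordFiltration h n) : j z * b ∈ coordFiltration h n := by
  refine map_mem_of_mem_coordFiltration h (LinearMap.mulLeft ℚ (j z)) _ (fun K c hK => ?_) hb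
  rw [LinearMap.mulLeft_apply, ← mul_assoc, hc _ _ _ _ (hj m z hz) (orderedProd_mem hι K),
    smul_mul_assoc, mul_assoc, ← map_mul]
  exact Submodule.smul_mem _ _ (orderedProd_mul_mem_coordFiltration h hK _)

theorem mul_map_mem_coordFiltration (a : A) {n : ℤ} {b : B}
    (hb : b ∈ coordFiltration h n) : b * j a ∈ coordFiltration h n := by
  refine map_mem_of_mem_coordFiltration h (LinearMap.mulRight ℚ (j a)) _ (fun K c hK => ?_) hb
  rw [LinearMap.mulRight_apply, mul_assoc, ← map_mul]
  exact orderedProd_mul_mem_coordFiltration h hK _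

theorem list_prod_sub_mem_coordFiltration (hc : IsGradedComm B ℬ) (hι : ∀ i, ι i ∈ ℬ 1)
    (hj : ∀ n a, a ∈ 𝒜 n → j a ∈ ℬ n) {d : Fin s → A} (hd : ∀ k, d k ∈ 𝒜 1)
    (l : List (Fin s)) :
    (l.map fun k => ι k - j (d k)).prod ∈ coordFiltration h l.length ∧
      (l.map fun k => ι k - j (d k)).prod - (l.map ι).prod ∈ coordFiltration h (l.length - 1) := by
  induction l with
  | nil =>
    refine ⟨?_, by simp⟩
    simpa using orderedProd_mul_mem_coordFiltration h (K := ∅) (n := 0) (by simp) 1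
  | cons a l ih =>
    obtain ⟨ih₁, ih₂⟩ := ih
    have hd_mul := map_mul_mem_coordFiltration h hc hι hj (hd a) ih₁
    simp only [List.map_cons, List.prod_cons, List.length_cons, Nat.cast_add, Nat.cast_one,
      add_sub_cancel_right]
    constructor
    · rw [sub_mul]
      exact sub_mem (mul_mem_coordFiltration_add_one h hc hι a ih₁)
        (coordFiltration_mono h (by omega) hd_mul)
    · have hsplit : (ι a - j (d a)) * (l.map fun k => ι k - j (d k)).prod - ι a * (l.map ι).prod
          = ι a * ((l.map fun k => ι k - j (d k)).prod - (l.map ι).prod)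
            - j (d a) * (l.map fun k => ι k - j (d k)).prod := by
        noncomm_ring
      rw [hsplit]
      refine sub_mem ?_ hd_mul
      simpa using mul_mem_coordFiltration_add_one h hc hι a ih₂

/-- Replacing each `ι k` by `ι k - j (d k)` is unitriangular with respect to the filtration by
the number of `ι`-factors, hence invertible. -/
theorem bijective_basisSum_sub (hfree : Function.Bijective (basisSum ι j))
    (hc : IsGradedComm B ℬ) (hι : ∀ i, ι i ∈ ℬ 1) (hj : ∀ n a, a ∈ 𝒜 n → j a ∈ ℬ n)
    {d : Fin s → A} (hd : ∀ k, d k ∈ 𝒜 1) :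
    Function.Bijective (basisSum (fun k => ι k - j (d k)) j) := by
  set N : Module.End ℚ B := basisSum (fun k => ι k - j (d k)) j ∘ₗ (coords hfree).toLinearMap - 1
  have hN : ∀ n b, b ∈ coordFiltration hfree n → N b ∈ coordFiltration hfree (n - 1) := by
    refine fun n b hb => map_mem_of_mem_coordFiltration hfree N _ (fun K a hK => ?_) hb
    have hdiff := (list_prod_sub_mem_coordFiltration hfree hc hι hj hd (K.sort (· ≤ ·))).2
    rw [Finset.length_sort] at hdiff
    simp only [N, LinearMap.sub_apply, LinearMap.comp_apply, LinearEquiv.coe_coe,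
      coords_orderedProd_mul, basisSum_single, Module.End.one_apply, ← sub_mul]
    exact coordFiltration_mono hfree (by omega) (mul_map_mem_coordFiltration hfree a hdiff)
  have hNpow : ∀ (k : ℕ) n b,
      b ∈ coordFiltration hfree n → (N ^ k) b ∈ coordFiltration hfree (n - k) := by
    intro k
    induction k with
    | zero => simp
    | succ k ih =>
      intro n b hb
      rw [pow_succ, Module.End.mul_apply]
      simpa [sub_sub, add_comm] using ih _ _ (hN n b hb)
  have hnil : IsNilpotent N := ⟨s + 1, LinearMap.ext fun b =>
    eq_zero_of_mem_coordFiltration_neg_one hfree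
      (by simpa using hNpow (s + 1) s b (mem_coordFiltration_card hfree b))⟩
  have hbij := (Module.End.isUnit_iff _).mp hnil.isUnit_add_one
  rw [sub_add_cancel, LinearMap.coe_comp] at hbij
  simpa using hbij.comp (coords hfree).symm.bijective

end ChangeOfBasis

section CoeffMap

variable {A B : Type*} [Ring A] [Algebra ℚ A] [Ring B] [Algebra ℚ B] {s : ℕ}
  {ι : Fin s → B} {j : A →ₐ[ℚ] B} (h : Function.Bijective (basisSum ι j)) (φ : A →ₐ[ℚ] B)

noncomputable def coeffMap (K : Finset (Fin s)) : A →ₗ[ℚ] A :=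
  LinearMap.proj K ∘ₗ (coords h).toLinearMap ∘ₗ φ.toLinearMap

@[simp]
theorem coeffMap_apply (K : Finset (Fin s)) (u : A) : coeffMap h φ K u = coords h (φ u) K :=
  rfl

theorem sum_orderedProd_mul_coeffMap (u : A) :
    ∑ K, orderedProd ι K * j (coeffMap h φ K u) = φ u := by
  rw [← basisSum_apply, ← basisSum_coords h (φ u)]
  rfl

variable {𝒜 : ℤ → Submodule ℚ A} {ℬ : ℤ → Submodule ℚ B} [GradedRing 𝒜] [GradedRing ℬ]

theorem coeffMap_mem (hι : ∀ i, ι i ∈ ℬ 1) (hj : ∀ n a, a ∈ 𝒜 n → j a ∈ ℬ n)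
    (hφ : ∀ n a, a ∈ 𝒜 n → φ a ∈ ℬ n) {m : ℤ} {u : A} (hu : u ∈ 𝒜 m) (K : Finset (Fin s)) :
    coeffMap h φ K u ∈ 𝒜 (m - K.card) :=
  coords_mem h hι hj (hφ m u hu) K

omit [GradedRing 𝒜] in
theorem orderedProd_mul_mul_orderedProd_mul (hc : IsGradedComm B ℬ) (hι : ∀ i, ι i ∈ ℬ 1)
    (hj : ∀ n a, a ∈ 𝒜 n → j a ∈ ℬ n) {m : ℤ} {a : A} (ha : a ∈ 𝒜 m) (b : A)
    (I J : Finset (Fin s)) :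
    orderedProd ι I * j a * (orderedProd ι J * j b)
      = ((-1 : ℚ) ^ (m * J.card)) • (orderedProd ι I * orderedProd ι J * j (a * b)) := by
  rw [mul_assoc, ← mul_assoc (j a), hc _ _ _ _ (hj m a ha) (orderedProd_mem hι J)]
  simp only [smul_mul_assoc, mul_smul_comm, mul_assoc, map_mul]

theorem coeffMap_mul (hc : IsGradedComm B ℬ) (hι : ∀ i, ι i ∈ ℬ 1)
    (hj : ∀ n a, a ∈ 𝒜 n → j a ∈ ℬ n) (hφ : ∀ n a, a ∈ 𝒜 n → φ a ∈ ℬ n)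
    {m : ℤ} {u : A} (hu : u ∈ 𝒜 m) (v : A) (K : Finset (Fin s)) :
    coeffMap h φ K (u * v) = ∑ p : Finset (Fin s) × Finset (Fin s),
      ((-1 : ℚ) ^ ((m - p.1.card) * p.2.card)) • coords h (orderedProd ι p.1 * orderedProd ι p.2
        * j (coeffMap h φ p.1 u * coeffMap h φ p.2 v)) K := by
  rw [coeffMap_apply, map_mul, ← sum_orderedProd_mul_coeffMap h φ u,
    ← sum_orderedProd_mul_coeffMap h φ v, Finset.sum_mul_sum, Fintype.sum_prod_type]
  simp only [orderedProd_mul_mul_orderedProd_mul hc hι hj (coeffMap_mem h φ hι hj hφ hu _),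
    map_sum, map_smul, Finset.sum_apply, Pi.smul_apply]

/-- By multiplicativity of `φ`, `coeffMap K` obeys the Leibniz rule up to products
`coeffMap I u * coeffMap J v` with `∅ ≠ J ⊂ K`. These are killed by `z` by induction on `K`, so
`z * coeffMap K` is a derivation of degree `-|K|`. -/
theorem mul_coeffMap_eq_zero (hcA : IsGradedComm A 𝒜) (hcB : IsGradedComm B ℬ)
    (hno : NoNegativeDerivations A 𝒜) (hι : ∀ i, ι i ∈ ℬ 1) (hj : ∀ n a, a ∈ 𝒜 n → j a ∈ ℬ n)
    (hφ : ∀ n a, a ∈ 𝒜 n → φ a ∈ ℬ n) {z : A} (hz : z ∈ 𝒜 0)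
    (hz_empty : ∀ u, z * coeffMap h φ ∅ u = z * u) (K : Finset (Fin s)) (hK : K ≠ ∅) (u : A) :
    z * coeffMap h φ K u = 0 := by
  induction K using Finset.strongInduction generalizing u with
  | H K ih =>
  have hcard : 0 < K.card := Finset.card_pos.mpr (Finset.nonempty_iff_ne_empty.mpr hK)
  refine hno.apply_eq_zero (d := -K.card) (by omega) (LinearMap.mulLeft ℚ z ∘ₗ coeffMap h φ K)
    (fun n u hu => ?_) (fun m n u v hu hv => ?_) u
  · simpa [sub_eq_add_neg] using SetLike.mul_mem_graded hz (coeffMap_mem h φ hι hj hφ hu K)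
  simp only [LinearMap.comp_apply, LinearMap.mulLeft_apply]
  rw [coeffMap_mul h φ hcB hι hj hφ hu, Finset.mul_sum,
    Fintype.sum_eq_add (K, ∅) (∅, K) (by simp [hK]) ?_]
  · simp only [orderedProd_empty, mul_one, one_mul, coords_orderedProd_mul, Finset.card_empty,
      Nat.cast_zero, sub_zero, mul_zero, zpow_zero, one_smul, Pi.single_eq_same, mul_smul_comm]
    have hcomm := hcA.mul_comm_of_mem_zero hz
    have h₁ : z * (coeffMap h φ K u * coeffMap h φ ∅ v) = z * coeffMap h φ K u * v := by
      rw [← mul_assoc, hcomm, mul_assoc, hz_empty, ← mul_assoc, ← hcomm]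
    have h₂ : z * (coeffMap h φ ∅ u * coeffMap h φ K v) = u * (z * coeffMap h φ K v) := by
      rw [← mul_assoc, hz_empty, hcomm u, mul_assoc]
    rw [h₁, h₂, neg_one_zpow_eq_of_even_sub (b := -K.card * m) ⟨m * K.card, by ring⟩]
  rintro ⟨I, J⟩ ⟨hK₁, hK₂⟩
  obtain ⟨c, hIJ, hc⟩ := orderedProd_mul_orderedProd hcB hι I J
  rw [hIJ, smul_mul_assoc, map_smul, coords_orderedProd_mul]
  by_cases hdisj : Disjoint I J
  · by_cases hU : K = I ∪ J
    · subst hU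
      have hJ : J ≠ ∅ := by rintro rfl; simp at hK₁
      have hJK : J ⊂ I ∪ J := by
        refine Finset.ssubset_iff_subset_ne.mpr ⟨Finset.subset_union_right, fun hJ' => hK₂ ?_⟩
        have hI : I ⊆ J := by rw [hJ']; exact Finset.subset_union_left
        exact Prod.ext (hdisj.eq_bot_of_le hI) hJ'
      simp only [Pi.smul_apply, Pi.single_eq_same, mul_smul_comm]
      rw [← mul_assoc, hcA.mul_comm_of_mem_zero hz, mul_assoc, ih J hJK hJ, mul_zero,
        smul_zero, smul_zero]
    · simp [hU]
  · simp [hc hdisj]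

end CoeffMap

section ProjZeroIdeal

variable {A B : Type*} [Ring A] [Algebra ℚ A] [Ring B] [Algebra ℚ B] {s : ℕ}
  {𝒜 : ℤ → Submodule ℚ A} [GradedRing 𝒜]

variable (𝒜) in
noncomputable def projZeroIdeal (y : Fin s → A) : Ideal A :=
  Ideal.span (Set.range fun k => proj 𝒜 0 (y k))

theorem proj_zero_mul_proj_zero_eq_zero (hc : IsGradedComm A 𝒜)
    (hno : NoNegativeDerivations A 𝒜) {y y' : A} (hy : y * y' + y' * y = 0) :
    proj 𝒜 0 y * proj 𝒜 0 y' = 0 := by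
  refine eq_zero_of_add_self_eq_zero ?_
  nth_rewrite 2 [hc.mul_comm_of_mem_zero (proj_mem 𝒜 0 y)]
  rw [← hno.proj_zero_mul hc, ← hno.proj_zero_mul hc, ← map_add, hy, map_zero]

theorem exists_eq_sum_of_mem_projZeroIdeal {y : Fin s → A} {w : A} (hw : w ∈ projZeroIdeal 𝒜 y) :
    ∃ a : Fin s → A, w = ∑ t, a t * proj 𝒜 0 (y t) := by
  obtain ⟨a, ha⟩ := (Submodule.mem_span_range_iff_exists_fun A).mp hw
  exact ⟨a, by simpa using ha.symm⟩

theorem mul_mem_projZeroIdeal_eq_zero (hc : IsGradedComm A 𝒜) (hno : NoNegativeDerivations A 𝒜)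
    {y : Fin s → A} (hy : ∀ k t, y k * y t + y t * y k = 0) (k : Fin s) {w : A}
    (hw : w ∈ projZeroIdeal 𝒜 y) : proj 𝒜 0 (y k) * w = 0 := by
  obtain ⟨a, rfl⟩ := exists_eq_sum_of_mem_projZeroIdeal hw
  rw [Finset.mul_sum]
  refine Finset.sum_eq_zero fun t _ => ?_
  rw [← mul_assoc, hc.mul_comm_of_mem_zero (proj_mem 𝒜 0 _), mul_assoc,
    proj_zero_mul_proj_zero_eq_zero hc hno (hy k t), mul_zero]

theorem mem_projZeroIdeal_mul_eq_zero {y : Fin s → A} {w g : A}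
    (hw : w ∈ projZeroIdeal 𝒜 y) (hg : ∀ t, proj 𝒜 0 (y t) * g = 0) : w * g = 0 := by
  obtain ⟨a, rfl⟩ := exists_eq_sum_of_mem_projZeroIdeal hw
  simp only [Finset.sum_mul, mul_assoc, hg, mul_zero, Finset.sum_const_zero]

theorem proj_mul_mem_projZeroIdeal (hc : IsGradedComm A 𝒜) (hno : NoNegativeDerivations A 𝒜)
    {y : Fin s → A} (hy : ∀ k, proj 𝒜 1 (y k) = 0) (i : Fin s) {r : ℤ} (hr : 0 ≤ r) {P : A}
    (hP : ∀ q, 0 ≤ q → q ≤ r - 2 → proj 𝒜 q P ∈ projZeroIdeal 𝒜 y) :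
    proj 𝒜 r (y i * P) ∈ projZeroIdeal 𝒜 y := by
  classical
  rw [proj_mul 𝒜 r]
  refine Submodule.sum_mem _ fun p _ => ?_
  rcases lt_trichotomy p 0 with hp | rfl | hp
  · rw [hno.mul_eq_zero_of_neg_left hc hp (proj_mem 𝒜 p _) (by omega) (proj_mem 𝒜 _ _)]
    exact zero_mem _
  · rw [hc.mul_comm_of_mem_zero (proj_mem 𝒜 0 _)]
    exact Ideal.mul_mem_left _ _ (Ideal.subset_span ⟨i, rfl⟩)
  · obtain rfl | hp₂ : p = 1 ∨ 2 ≤ p := by omega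
    · rw [hy i, zero_mul]
      exact zero_mem _
    by_cases hq : r - p < 0
    · rw [hno.mul_eq_zero_of_neg_right hc hq (proj_mem 𝒜 _ _) hp.ne' (proj_mem 𝒜 p _)]
      exact zero_mem _
    · exact Ideal.mul_mem_left _ _ (hP _ (by omega) (by omega))

theorem proj_mul_list_prod_mem_projZeroIdeal (hc : IsGradedComm A 𝒜)
    (hno : NoNegativeDerivations A 𝒜) {y : Fin s → A} (hy : ∀ k, proj 𝒜 1 (y k) = 0)
    (l : List (Fin s)) (i : Fin s) {r : ℤ} (hr₀ : 0 ≤ r) (hr : r ≤ l.length + 1) :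
    proj 𝒜 r (y i * (l.map y).prod) ∈ projZeroIdeal 𝒜 y := by
  induction l generalizing i r with
  | nil =>
    exact proj_mul_mem_projZeroIdeal hc hno hy i hr₀ fun q hq₀ hq => by simp at hr; omega
  | cons a l ih =>
    refine proj_mul_mem_projZeroIdeal hc hno hy i hr₀ fun q hq₀ hq => ?_
    rw [List.map_cons, List.prod_cons]
    exact ih a hq₀ (by simp at hr; omega)

end ProjZeroIdeal

section PointEvaluation

variable {A B : Type*} [Ring A] [Algebra ℚ A] [Ring B] [Algebra ℚ B] {s : ℕ}
  {ι : Fin s → B} {j : A →ₐ[ℚ] B} (h : Function.Bijective (basisSum ι j)) {φ : A →ₐ[ℚ] B}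
  {e : B →ₐ[ℚ] A} {𝒜 : ℤ → Submodule ℚ A} {ℬ : ℤ → Submodule ℚ B} [GradedRing 𝒜] [GradedRing ℬ]

theorem sum_e_orderedProd_mul_coeffMap (hej : e.comp j = AlgHom.id ℚ A)
    (heφ : e.comp φ = AlgHom.id ℚ A) (u : A) :
    ∑ K, e (orderedProd ι K) * coeffMap h φ K u = u := by
  conv_rhs => rw [← AlgHom.id_apply (R := ℚ) u, ← heφ, AlgHom.comp_apply,
    ← sum_orderedProd_mul_coeffMap h φ u, map_sum]
  simp only [map_mul, ← AlgHom.comp_apply e j, hej, AlgHom.id_apply]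

theorem sub_coeffMap_empty (hej : e.comp j = AlgHom.id ℚ A) (heφ : e.comp φ = AlgHom.id ℚ A)
    (hι : ∀ i, ι i ∈ ℬ 1) (hj : ∀ n a, a ∈ 𝒜 n → j a ∈ ℬ n) (hφ : ∀ n a, a ∈ 𝒜 n → φ a ∈ ℬ n)
    {n : ℤ} {u : A} (hu : u ∈ 𝒜 n) :
    u - coeffMap h φ ∅ u = ∑ K ∈ Finset.univ.erase ∅,
      proj 𝒜 K.card (e (orderedProd ι K)) * coeffMap h φ K u := by
  have hsum : u = ∑ K, proj 𝒜 K.card (e (orderedProd ι K)) * coeffMap h φ K u := by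
    conv_lhs => rw [← proj_of_mem 𝒜 hu, ← sum_e_orderedProd_mul_coeffMap h hej heφ u, map_sum]
    refine Finset.sum_congr rfl fun K _ => ?_
    rw [proj_mul_of_mem_right 𝒜 (coeffMap_mem h φ hι hj hφ hu K), sub_sub_cancel]
  rw [← Finset.add_sum_erase _ _ (Finset.mem_univ ∅)] at hsum
  simp only [orderedProd_empty, map_one, Finset.card_empty, Nat.cast_zero,
    proj_of_mem 𝒜 (SetLike.one_mem_graded 𝒜), one_mul] at hsum
  exact sub_eq_of_eq_add' hsum

omit [GradedRing ℬ] in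
theorem proj_card_e_orderedProd_mem (hcA : IsGradedComm A 𝒜) (hno : NoNegativeDerivations A 𝒜)
    (hnorm : ∀ k, proj 𝒜 1 (e (ι k)) = 0) {K : Finset (Fin s)} (hK : K ≠ ∅) :
    proj 𝒜 K.card (e (orderedProd ι K)) ∈ projZeroIdeal 𝒜 (fun k => e (ι k)) := by
  obtain ⟨i, l, hil⟩ := List.exists_cons_of_ne_nil (l := K.sort (· ≤ ·)) (by
    rwa [Ne, ← List.length_eq_zero_iff, Finset.length_sort, Finset.card_eq_zero])
  have hcard : K.card = l.length + 1 := by rw [← Finset.length_sort (· ≤ ·), hil]; rfl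
  rw [orderedProd, map_list_prod, hil, List.map_cons, List.map_cons, List.prod_cons, List.map_map,
    hcard]
  exact proj_mul_list_prod_mem_projZeroIdeal hcA hno hnorm l i (by omega) (by omega)

theorem coeffMap_empty_apply (hcA : IsGradedComm A 𝒜) (hcB : IsGradedComm B ℬ)
    (hno : NoNegativeDerivations A 𝒜) (hι : ∀ i, ι i ∈ ℬ 1) (hj : ∀ n a, a ∈ 𝒜 n → j a ∈ ℬ n)
    (hφ : ∀ n a, a ∈ 𝒜 n → φ a ∈ ℬ n) (hej : e.comp j = AlgHom.id ℚ A)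
    (heφ : e.comp φ = AlgHom.id ℚ A) (hnorm : ∀ k, proj 𝒜 1 (e (ι k)) = 0) (u : A) :
    coeffMap h φ ∅ u = u := by
  have hanti : ∀ k t, e (ι k) * e (ι t) + e (ι t) * e (ι k) = 0 := fun k t => by
    rw [← map_mul, ← map_mul, ← map_add, hcB 1 1 _ _ (hι k) (hι t)]
    simp
  have hconst : ∀ k u, proj 𝒜 0 (e (ι k)) * (u - coeffMap h φ ∅ u) = 0 := fun k =>
    apply_eq_zero_of_forall_mem 𝒜
      (LinearMap.mulLeft ℚ (proj 𝒜 0 (e (ι k))) ∘ₗ (LinearMap.id - coeffMap h φ ∅))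
      fun n u hu => by
        simp only [LinearMap.comp_apply, LinearMap.mulLeft_apply, LinearMap.sub_apply,
          LinearMap.id_apply, sub_coeffMap_empty h hej heφ hι hj hφ hu, Finset.mul_sum]
        refine Finset.sum_eq_zero fun K hK => ?_
        rw [← mul_assoc, mul_mem_projZeroIdeal_eq_zero hcA hno hanti k
          (proj_card_e_orderedProd_mem hcA hno hnorm (Finset.ne_of_mem_erase hK)), zero_mul]
  have hconst_coeff : ∀ k (K : Finset (Fin s)), K ≠ ∅ → ∀ u,
      proj 𝒜 0 (e (ι k)) * coeffMap h φ K u = 0 := fun k =>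
    mul_coeffMap_eq_zero h φ hcA hcB hno hι hj hφ (proj_mem 𝒜 0 _)
      fun u => (sub_eq_zero.mp (by rw [← mul_sub, hconst])).symm
  have hsub := apply_eq_zero_of_forall_mem 𝒜 (LinearMap.id - coeffMap h φ ∅)
    (fun n u hu => by
      simp only [LinearMap.sub_apply, LinearMap.id_apply,
        sub_coeffMap_empty h hej heφ hι hj hφ hu]
      refine Finset.sum_eq_zero fun K hK => ?_
      exact mem_projZeroIdeal_mul_eq_zero
        (proj_card_e_orderedProd_mem hcA hno hnorm (Finset.ne_of_mem_erase hK))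
        fun t => hconst_coeff t K (Finset.ne_of_mem_erase hK) u) u
  exact (sub_eq_zero.mp hsub).symm

theorem eq_of_proj_one_e_eq_zero (hfree : Function.Bijective (basisSum ι j))
    (hcA : IsGradedComm A 𝒜) (hcB : IsGradedComm B ℬ) (hno : NoNegativeDerivations A 𝒜)
    (hι : ∀ i, ι i ∈ ℬ 1) (hj : ∀ n a, a ∈ 𝒜 n → j a ∈ ℬ n)
    (hφ : ∀ n a, a ∈ 𝒜 n → φ a ∈ ℬ n) (hej : e.comp j = AlgHom.id ℚ A)
    (heφ : e.comp φ = AlgHom.id ℚ A) (hnorm : ∀ k, proj 𝒜 1 (e (ι k)) = 0) (u : A) :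
    φ u = j u := by
  have hempty := coeffMap_empty_apply hfree hcA hcB hno hι hj hφ hej heφ hnorm
  rw [← sum_orderedProd_mul_coeffMap hfree φ u,
    Finset.sum_eq_single ∅ (fun K _ hK => ?_) (by simp)]
  · simp [hempty]
  · have h0 := mul_coeffMap_eq_zero hfree φ hcA hcB hno hι hj hφ (SetLike.one_mem_graded 𝒜)
      (fun u => by rw [hempty]) K hK u
    rw [one_mul] at h0
    rw [h0, map_zero, mul_zero]

end PointEvaluation

theorem stmt6_general (s : ℕ)
    (A B : Type*) [Ring A] [Algebra ℚ A] [Ring B] [Algebra ℚ B]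
    (𝒜 : ℤ → Submodule ℚ A) (ℬ : ℤ → Submodule ℚ B) [GradedRing 𝒜] [GradedRing ℬ]
    (hcA : IsGradedComm A 𝒜) (hcB : IsGradedComm B ℬ)
    (hno : NoNegativeDerivations A 𝒜)
    (ι : Fin s → B) (hι : ∀ i, ι i ∈ ℬ 1)
    (j : A →ₐ[ℚ] B) (hj : ∀ (n : ℤ) (a : A), a ∈ 𝒜 n → j a ∈ ℬ n)
    (hfree : Function.Bijective fun c : Finset (Fin s) → A =>
      ∑ I : Finset (Fin s), orderedProd ι I * j (c I))
    (φ : A →ₐ[ℚ] B) (hφdeg : ∀ (n : ℤ) (a : A), a ∈ 𝒜 n → φ a ∈ ℬ n)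
    (e : B →ₐ[ℚ] A)
    (hej : e.comp j = AlgHom.id ℚ A)
    (heφ : e.comp φ = AlgHom.id ℚ A) :
    ∀ u : A, φ u = j u := by
  have hbasis : Function.Bijective (basisSum ι j) := by
    convert hfree using 1
    exact funext (basisSum_apply ι j)
  have hd : ∀ k, proj 𝒜 1 (e (ι k)) ∈ 𝒜 1 := fun k => proj_mem 𝒜 1 _
  refine eq_of_proj_one_e_eq_zero (bijective_basisSum_sub hbasis hcB hι hj hd) hcA hcB hno
    (fun k => sub_mem (hι k) (hj 1 _ (hd k))) hj hφdeg hej heφ fun k => ?_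
  rw [map_sub, ← AlgHom.comp_apply e j, hej, AlgHom.id_apply, map_sub, proj_of_mem 𝒜 (hd k),
    sub_self]

/-- let `C` be a space whose rational cohomology algebra `A = H^*(C;ℚ)` is
finite-dimensional with no nonzero negative-degree derivations, `T = (S¹)^s` a torus, and
`f : T × C → C` a map with `f(y₀,·)` homotopic to the identity. Model the Künneth isomorphism
`H^*(T×C;ℚ) ≅ H^*(T;ℚ) ⊗ H^*(C;ℚ)` by a graded algebra `B` with exterior degree-1 classes
`ι_i = H^*(T)`-generators, `j = pr_C^* : A → B` (`u ↦ 1 ⊗ u`) and `{ι_I}` a free basis; let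
`φ = f^* : A → B` and `e = (y₀,·)^* : B → A`, so that `e ∘ j = id` (since `pr_C ∘ (y₀,·) = id`)
and `e ∘ φ = id` (by homotopy invariance, since `f(y₀,·) ≃ id`). Then
`f^*(u) = 1 ⊗ u` for all `u`, i.e. `φ = j`. -/
theorem stmt6 (Csp : Type*) [TopologicalSpace Csp] (s : ℕ) (y₀ : Fin s → Circle)
    (f : C((Fin s → Circle) × Csp, Csp))
    (hf : (f.comp ⟨fun c => (y₀, c), (continuous_const.prodMk continuous_id)⟩).Homotopic
      (ContinuousMap.id Csp))
    (A B : Type*) [Ring A] [Algebra ℚ A] [Ring B] [Algebra ℚ B]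
    (𝒜 : ℤ → Submodule ℚ A) (ℬ : ℤ → Submodule ℚ B) [GradedRing 𝒜] [GradedRing ℬ]
    (hcA : IsGradedComm A 𝒜) (hcB : IsGradedComm B ℬ)
    [FiniteDimensional ℚ A] (hno : NoNegativeDerivations A 𝒜)
    (ι : Fin s → B) (hι : ∀ i, ι i ∈ ℬ 1)
    (j : A →ₐ[ℚ] B) (hj : ∀ (n : ℤ) (a : A), a ∈ 𝒜 n → j a ∈ ℬ n)
    (hfree : Function.Bijective fun c : Finset (Fin s) → A =>
      ∑ I : Finset (Fin s), orderedProd ι I * j (c I))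
    (φ : A →ₐ[ℚ] B) (hφdeg : ∀ (n : ℤ) (a : A), a ∈ 𝒜 n → φ a ∈ ℬ n)
    (e : B →ₐ[ℚ] A)
    (hej : e.comp j = AlgHom.id ℚ A)
    (heφ : e.comp φ = AlgHom.id ℚ A) :
    ∀ u : A, φ u = j u :=
  stmt6_general s A B 𝒜 ℬ hcA hcB hno ι hι j hj hfree φ hφdeg e hej heφ
end
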